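/- Let C ⊆ ℝ^d be a nonempty closed convex set, let f : ℝ^d → ℝ be convex and differentiable with L-Lipschitz continuous gradient (L > 0), with finite infimum f* = inf_{y ∈ ℝ^d} f(y), and suppose the solution set S = argmin_{y ∈ C} f(y) is nonempty. Assume f is μ-restricted strongly convex on C: f(y) - f(P_S y) ≥ (μ/2)‖y - P_S y‖² for all y ∈ C, with 0 < μ < 4LM. Fix x ∈ C and let H : Ω → ℝ^d be measurable with E[H] = ∇f(x) and E[‖H‖²] ≤ M‖∇f(x)‖² + σ² for constants M > 0 and σ ∈ ℝ. Let 0 < γ ≤ 1/(2LM), set ρ = γμ(1 - γLM) and σ₁² = σ² + 2LM(min_{y ∈ C} f(y) - f*). Then the random point x⁺ = P_C(x - γH) satisfies E[‖x⁺ - P_S x⁺‖²] ≤ (1 - ρ)‖x - P_S x‖² + γ²σ₁². (One-step form of Theorem 2 for the projected stochastic gradient method with constant step-size.) -/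

import Mathlib

/-!
Projecting onto `C` does not increase the distance to the point `projS x ∈ S ⊆ C`, so pointwise
`dist(x⁺, S)² ≤ ‖(x - projS x) - γ H‖²`. In expectation, unbiasedness turns the cross term into
`-2γ ⟪x - projS x, ∇f x⟫ ≤ -2γ (f x - min_C f)` by convexity, while the weak growth condition and
the smoothness bound `‖∇f x‖² ≤ 2L (f x - inf f)` give `E‖H‖² ≤ 2LM (f x - min_C f) + σ₁²`.
Since `γLM ≤ 1`, what remains is a nonnegative multiple of `f x - min_C f`, which restricted strong
convexity bounds below by `μ/2 ‖x - projS x‖²`.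
-/

open MeasureTheory Set
open scoped RealInnerProductSpace

section

variable {E : Type*} [NormedAddCommGroup E] [InnerProductSpace ℝ E]

theorem inner_sub_le_zero_of_forall_norm_sub_le {K : Set E} (hK : Convex ℝ K) {u p : E}
    (hp : p ∈ K) (hmin : ∀ z ∈ K, ‖u - p‖ ≤ ‖u - z‖) {w : E} (hw : w ∈ K) :
    ⟪u - p, w - p⟫ ≤ 0 := by
  have : Nonempty K := ⟨⟨p, hp⟩⟩
  refine (norm_eq_iInf_iff_real_inner_le_zero hK hp).1 (le_antisymm ?_ ?_) w hw
  · exact le_ciInf fun z => hmin z z.2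
  · exact ciInf_le ⟨0, forall_mem_range.2 fun _ => norm_nonneg _⟩ (⟨p, hp⟩ : K)

theorem norm_sub_sq_le_of_forall_norm_sub_le {K : Set E} (hK : Convex ℝ K) {u p : E}
    (hp : p ∈ K) (hmin : ∀ z ∈ K, ‖u - p‖ ≤ ‖u - z‖) {s : E} (hs : s ∈ K) :
    ‖p - s‖ ^ 2 ≤ ‖u - s‖ ^ 2 := by
  have hobtuse := inner_sub_le_zero_of_forall_norm_sub_le hK hp hmin hs
  have hsplit : ‖u - s‖ ^ 2 = ‖u - p‖ ^ 2 - 2 * ⟪u - p, s - p⟫ + ‖p - s‖ ^ 2 := by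
    rw [show u - s = (u - p) - (s - p) by abel, norm_sub_sq_real, norm_sub_rev s p]
  linarith [sq_nonneg ‖u - p‖]

section Smooth

variable [CompleteSpace E] {f : E → ℝ}

theorem hasDerivAt_comp_add_smul (hf : Differentiable ℝ f) (x v : E) (t : ℝ) :
    HasDerivAt (fun t : ℝ => f (x + t • v)) ⟪gradient f (x + t • v), v⟫ t := by
  have hline : HasDerivAt (fun t : ℝ => x + t • v) v t := by
    simpa using ((hasDerivAt_id t).smul_const v).const_add x
  have := (hasGradientAt_iff_hasFDerivAt.1 (hf _).hasGradientAt).comp_hasDerivAt t hline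
  rwa [InnerProductSpace.toDual_apply_apply] at this

theorem ConvexOn.add_inner_gradient_le (hconv : ConvexOn ℝ univ f) (hf : Differentiable ℝ f)
    (x y : E) : f x + ⟪gradient f x, y - x⟫ ≤ f y := by
  have hline : ConvexOn ℝ univ (fun t : ℝ => f (x + t • (y - x))) := by
    have hparam : (fun t : ℝ => f (x + t • (y - x))) = f ∘ AffineMap.lineMap x y := by
      ext t
      simp [AffineMap.lineMap_apply, add_comm]
    simpa only [hparam, preimage_univ] using hconv.comp_affineMap (AffineMap.lineMap x y)
  have := hline.le_slope_of_hasDerivAt (mem_univ 0) (mem_univ 1) one_pos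
    (hasDerivAt_comp_add_smul hf x (y - x) 0)
  simp only [slope_def_field, zero_smul, one_smul, add_zero, add_sub_cancel, sub_zero, div_one] at this
  linarith

theorem le_add_inner_gradient_add_sq {L : ℝ}
    (hLip : ∀ y z, ‖gradient f y - gradient f z‖ ≤ L * ‖y - z‖) (hf : Differentiable ℝ f)
    (x v : E) : f (x + v) ≤ f x + ⟪gradient f x, v⟫ + L / 2 * ‖v‖ ^ 2 := by
  set φ : ℝ → ℝ := fun t => f (x + t • v) - t * ⟪gradient f x, v⟫ - L * ‖v‖ ^ 2 / 2 * t ^ 2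
  have hφ : ∀ t, HasDerivAt φ
      (⟪gradient f (x + t • v) - gradient f x, v⟫ - L * ‖v‖ ^ 2 * t) t := by
    intro t
    refine (((hasDerivAt_comp_add_smul hf x v t).sub ((hasDerivAt_id t).mul_const _)).sub
      ((hasDerivAt_pow 2 t).const_mul (L * ‖v‖ ^ 2 / 2))).congr_deriv ?_
    rw [inner_sub_left]
    norm_num
    ring
  have hanti : AntitoneOn φ (Icc 0 1) := by
    refine antitoneOn_of_hasDerivWithinAt_nonpos (convex_Icc 0 1)
      (fun t _ => (hφ t).continuousAt.continuousWithinAt) (fun t _ => (hφ t).hasDerivWithinAt)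
      fun t ht => ?_
    rw [interior_Icc] at ht
    have hlip : ‖gradient f (x + t • v) - gradient f x‖ ≤ L * (t * ‖v‖) := by
      simpa [norm_smul, abs_of_pos ht.1] using hLip (x + t • v) x
    nlinarith [real_inner_le_norm (gradient f (x + t • v) - gradient f x) v,
      mul_le_mul_of_nonneg_right hlip (norm_nonneg v)]
  have := hanti (left_mem_Icc.2 zero_le_one) (right_mem_Icc.2 zero_le_one) zero_le_one
  simp only [φ, zero_smul, add_zero, zero_mul, sub_zero, one_smul, one_mul, one_pow, mul_one] at this
  linarith

theorem norm_gradient_sq_le {L : ℝ} (hL : 0 < L)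
    (hLip : ∀ y z, ‖gradient f y - gradient f z‖ ≤ L * ‖y - z‖) (hf : Differentiable ℝ f)
    (hbdd : BddBelow (range f)) (x : E) :
    ‖gradient f x‖ ^ 2 ≤ 2 * L * (f x - ⨅ y, f y) := by
  set g := gradient f x
  -- one gradient step of length `1 / L` from `x` already decreases `f` by `‖g‖² / (2L)`
  have hdesc := le_add_inner_gradient_add_sq hLip hf x (-L⁻¹ • g)
  rw [real_inner_smul_right, real_inner_self_eq_norm_sq, norm_smul, mul_pow, Real.norm_eq_abs,
    sq_abs] at hdesc
  have hstep : -L⁻¹ * ‖g‖ ^ 2 + L / 2 * ((-L⁻¹) ^ 2 * ‖g‖ ^ 2) = -(‖g‖ ^ 2 / (2 * L)) := by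
    field_simp
    ring
  have hinf : ⨅ y, f y ≤ f (x + -L⁻¹ • g) := ciInf_le hbdd _
  have := (div_le_iff₀ (by positivity)).1 (by linarith : ‖g‖ ^ 2 / (2 * L) ≤ f x - ⨅ y, f y)
  linarith

end Smooth

theorem norm_sub_smul_sq_eq (u h : E) (γ : ℝ) :
    ‖u - γ • h‖ ^ 2 = ‖u‖ ^ 2 - 2 * γ * ⟪u, h⟫ + γ ^ 2 * ‖h‖ ^ 2 := by
  rw [norm_sub_sq_real, real_inner_smul_right, norm_smul, mul_pow, Real.norm_eq_abs, sq_abs]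
  ring

section Expectation

variable {Ω : Type*} [MeasurableSpace Ω] {P : Measure Ω} {H : Ω → E}

theorem integrable_norm_sub_smul_sq [IsFiniteMeasure P] (hH : Integrable H P)
    (hH2 : Integrable (fun a => ‖H a‖ ^ 2) P) (u : E) (γ : ℝ) :
    Integrable (fun a => ‖u - γ • H a‖ ^ 2) P := by
  have hlin : Integrable (fun a => ‖u‖ ^ 2 - 2 * γ * ⟪u, H a⟫) P :=
    (integrable_const _).sub ((hH.const_inner u).const_mul _)
  simp_rw [norm_sub_smul_sq_eq]
  exact hlin.add (hH2.const_mul _)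

theorem integral_norm_sub_smul_sq [CompleteSpace E] [IsProbabilityMeasure P] (hH : Integrable H P)
    (hH2 : Integrable (fun a => ‖H a‖ ^ 2) P) (u : E) (γ : ℝ) :
    ∫ a, ‖u - γ • H a‖ ^ 2 ∂P =
      ‖u‖ ^ 2 - 2 * γ * ⟪u, ∫ a, H a ∂P⟫ + γ ^ 2 * ∫ a, ‖H a‖ ^ 2 ∂P := by
  have hlin : Integrable (fun a => ‖u‖ ^ 2 - 2 * γ * ⟪u, H a⟫) P :=
    (integrable_const _).sub ((hH.const_inner u).const_mul _)
  simp_rw [norm_sub_smul_sq_eq]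
  rw [integral_add hlin (hH2.const_mul _),
    integral_sub (integrable_const _) ((hH.const_inner u).const_mul _), integral_const,
    integral_const_mul, integral_const_mul, integral_inner hH]
  simp

end Expectation

theorem le_contraction_add_noise {r q D N c γ μ L M : ℝ} (hγ : 0 ≤ γ) (hγLM : γ * L * M ≤ 1)
    (hgap : D ≤ q) (hrsc : μ / 2 * r ≤ D) (hN : N ≤ 2 * L * M * D + c) :
    r - 2 * γ * q + γ ^ 2 * N ≤ (1 - γ * μ * (1 - γ * L * M)) * r + γ ^ 2 * c := by
  have hcoef : 0 ≤ 2 * γ * (1 - γ * L * M) := mul_nonneg (by linarith) (by linarith)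
  linarith [mul_le_mul_of_nonneg_left hN (sq_nonneg γ), mul_le_mul_of_nonneg_left hgap hγ,
    mul_le_mul_of_nonneg_left hrsc hcoef]

end

theorem stmt_2_general {d : ℕ} {Ω : Type*} [MeasurableSpace Ω] (P : Measure Ω)
    [IsProbabilityMeasure P]
    (C : Set (EuclideanSpace ℝ (Fin d)))
    (hCconv : Convex ℝ C)
    (f : EuclideanSpace ℝ (Fin d) → ℝ) (hfconv : ConvexOn ℝ Set.univ f)
    (hfdiff : Differentiable ℝ f)
    (L : ℝ) (hL : 0 < L)
    (hLip : ∀ y z, ‖gradient f y - gradient f z‖ ≤ L * ‖y - z‖)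
    (hbdd : BddBelow (Set.range f))
    (S : Set (EuclideanSpace ℝ (Fin d)))
    (hS : S = {y | y ∈ C ∧ ∀ z ∈ C, f y ≤ f z})
    (projC : EuclideanSpace ℝ (Fin d) → EuclideanSpace ℝ (Fin d))
    (hprojC : ∀ y, projC y ∈ C ∧ ∀ z ∈ C, ‖y - projC y‖ ≤ ‖y - z‖)
    (projS : EuclideanSpace ℝ (Fin d) → EuclideanSpace ℝ (Fin d))
    (hprojS : ∀ y, projS y ∈ S ∧ ∀ z ∈ S, ‖y - projS y‖ ≤ ‖y - z‖)
    (μ M σ : ℝ) (hM : 0 < M)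
    (hrsc : ∀ y ∈ C, f y - f (projS y) ≥ μ / 2 * ‖y - projS y‖ ^ 2)
    (x : EuclideanSpace ℝ (Fin d)) (hx : x ∈ C)
    (H : Ω → EuclideanSpace ℝ (Fin d))
    (hHint : Integrable H P) (hHL2 : Integrable (fun a => ‖H a‖ ^ 2) P)
    (hunbiased : ∫ a, H a ∂P = gradient f x)
    (hwgc : ∫ a, ‖H a‖ ^ 2 ∂P ≤ M * ‖gradient f x‖ ^ 2 + σ ^ 2)
    (γ : ℝ) (hγ : 0 < γ) (hγle : γ ≤ 1 / (2 * L * M))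
    (ρ : ℝ) (hρ : ρ = γ * μ * (1 - γ * L * M))
    (s : EuclideanSpace ℝ (Fin d)) (hs : s ∈ S)
    (σ1sq : ℝ) (hσ1 : σ1sq = σ ^ 2 + 2 * L * M * (f s - ⨅ y, f y)) :
    ∫ a, ‖projC (x - γ • H a) - projS (projC (x - γ • H a))‖ ^ 2 ∂P ≤
      (1 - ρ) * ‖x - projS x‖ ^ 2 + γ ^ 2 * σ1sq := by
  rw [hS] at hs hprojS
  obtain ⟨⟨hxsC, hxs_min⟩, -⟩ := hprojS x
  obtain ⟨hsC, hs_min⟩ := hs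
  have hstep : ∀ a, ‖projC (x - γ • H a) - projS (projC (x - γ • H a))‖ ^ 2 ≤
      ‖(x - projS x) - γ • H a‖ ^ 2 := fun a =>
    calc _ ≤ ‖projC (x - γ • H a) - projS x‖ ^ 2 := by gcongr; exact (hprojS _).2 _ (hprojS x).1
      _ ≤ ‖x - γ • H a - projS x‖ ^ 2 :=
        norm_sub_sq_le_of_forall_norm_sub_le hCconv (hprojC _).1 (hprojC _).2 hxsC
      _ = _ := by rw [sub_right_comm]
  have hmean := integral_mono_of_nonneg (ae_of_all _ fun _ => sq_nonneg _)
    (integrable_norm_sub_smul_sq hHint hHL2 _ γ) (ae_of_all _ hstep)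
  rw [integral_norm_sub_smul_sq hHint hHL2, hunbiased] at hmean
  have hgap : f x - f (projS x) ≤ ⟪x - projS x, gradient f x⟫ := by
    have := hfconv.add_inner_gradient_le hfdiff x (projS x)
    rw [← neg_sub x, inner_neg_right, real_inner_comm] at this
    linarith
  have hnoise : ∫ a, ‖H a‖ ^ 2 ∂P ≤
      2 * L * M * (f x - f (projS x)) + (σ ^ 2 + 2 * L * M * (f s - ⨅ y, f y)) := by
    rw [le_antisymm (hxs_min s hsC) (hs_min _ hxsC)]
    linarith [mul_le_mul_of_nonneg_left (norm_gradient_sq_le hL hLip hfdiff hbdd x) hM.le]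
  have hγLM : γ * L * M ≤ 1 := by
    rw [le_div_iff₀ (by positivity)] at hγle
    linarith
  rw [hρ, hσ1]
  exact hmean.trans (le_contraction_add_noise hγ.le hγLM hgap (hrsc x hx).le hnoise)

/-- One-step form of Theorem 2: projected stochastic gradient step under the weak
growth condition and restricted strong convexity contracts the squared distance
to the solution set up to a noise term `γ²σ₁²`. -/
theorem stmt_2 {d : ℕ} {Ω : Type*} [MeasurableSpace Ω] (P : Measure Ω)
    [IsProbabilityMeasure P]
    (C : Set (EuclideanSpace ℝ (Fin d))) (hCne : C.Nonempty) (hCclosed : IsClosed C)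
    (hCconv : Convex ℝ C)
    (f : EuclideanSpace ℝ (Fin d) → ℝ) (hfconv : ConvexOn ℝ Set.univ f)
    (hfdiff : Differentiable ℝ f)
    (L : ℝ) (hL : 0 < L)
    (hLip : ∀ y z, ‖gradient f y - gradient f z‖ ≤ L * ‖y - z‖)
    (hbdd : BddBelow (Set.range f))
    (S : Set (EuclideanSpace ℝ (Fin d)))
    (hS : S = {y | y ∈ C ∧ ∀ z ∈ C, f y ≤ f z}) (hSne : S.Nonempty)
    (projC : EuclideanSpace ℝ (Fin d) → EuclideanSpace ℝ (Fin d))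
    (hprojC : ∀ y, projC y ∈ C ∧ ∀ z ∈ C, ‖y - projC y‖ ≤ ‖y - z‖)
    (projS : EuclideanSpace ℝ (Fin d) → EuclideanSpace ℝ (Fin d))
    (hprojS : ∀ y, projS y ∈ S ∧ ∀ z ∈ S, ‖y - projS y‖ ≤ ‖y - z‖)
    (μ M σ : ℝ) (hM : 0 < M) (hμ : 0 < μ) (hμM : μ < 4 * L * M)
    (hrsc : ∀ y ∈ C, f y - f (projS y) ≥ μ / 2 * ‖y - projS y‖ ^ 2)
    (x : EuclideanSpace ℝ (Fin d)) (hx : x ∈ C)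
    (H : Ω → EuclideanSpace ℝ (Fin d)) (hHmeas : Measurable H)
    (hHint : Integrable H P) (hHL2 : Integrable (fun a => ‖H a‖ ^ 2) P)
    (hunbiased : ∫ a, H a ∂P = gradient f x)
    (hwgc : ∫ a, ‖H a‖ ^ 2 ∂P ≤ M * ‖gradient f x‖ ^ 2 + σ ^ 2)
    (γ : ℝ) (hγ : 0 < γ) (hγle : γ ≤ 1 / (2 * L * M))
    (ρ : ℝ) (hρ : ρ = γ * μ * (1 - γ * L * M))
    (s : EuclideanSpace ℝ (Fin d)) (hs : s ∈ S)
    (σ1sq : ℝ) (hσ1 : σ1sq = σ ^ 2 + 2 * L * M * (f s - ⨅ y, f y)) :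
    ∫ a, ‖projC (x - γ • H a) - projS (projC (x - γ • H a))‖ ^ 2 ∂P ≤
      (1 - ρ) * ‖x - projS x‖ ^ 2 + γ ^ 2 * σ1sq :=
  stmt_2_general P C hCconv f hfconv hfdiff L hL hLip hbdd S hS projC hprojC projS hprojS μ M σ hM
    hrsc x hx H hHint hHL2 hunbiased hwgc γ hγ hγle ρ hρ s hs σ1sq hσ1
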